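/- Let k ≥ 1, let m_1,…,m_k ≥ 1, and suppose every d_l = 2e_l is even and positive. For every multihomogeneous polynomial T of multidegree (d_1,…,d_k) and every c ∈ ℂ, the polynomials T and T + c·q_1^{e_1}⋯q_k^{e_k} have identical eigen-minors: M^l_{ij}(T + c·q_1^{e_1}⋯q_k^{e_k}) = M^l_{ij}(T) as polynomials for every group l and all indices i, j. In particular T and T + c·q_1^{d_1/2}⊗⋯⊗q_k^{d_k/2} have the same singular-tuple locus, giving the containment {T + c·q_1^{d_1/2}⊗⋯⊗q_k^{d_k/2} : c ∈ ℂ} ⊆ τ^{-1}(τ(T)) in the all-even case of the main theorem. -/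

import Mathlib

open MvPolynomial

/-
The eigen-minor `X j * ∂ᵢ T - X i * ∂ⱼ T` is the value at `T` of the derivation `X j ∂ᵢ - X i ∂ⱼ`,
the infinitesimal rotation in the `(i, j)`-plane. It kills every sum of squares `∑ x ∈ s, X x ^ 2`
in which `i` and `j` both occur or both do not occur, since such a quadric is invariant under those
rotations. Being a derivation, it then kills every product of powers of such quadrics, in
particular `∏ₜ qₜ ^ eₜ`; by linearity adding `c • ∏ₜ qₜ ^ eₜ` to `T` leaves all minors unchanged.
-/

namespace Derivation

variable {R A M ι : Type*} [CommSemiring R] [CommSemiring A] [AddCommMonoid M] [Algebra R A]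
  [Module A M] [Module R M]

theorem map_prod_pow_eq_zero (D : Derivation R A M) (s : Finset ι) (f : ι → A) (n : ι → ℕ)
    (h : ∀ t ∈ s, D (f t) = 0) : D (∏ t ∈ s, f t ^ n t) = 0 :=
  Finset.prod_induction _ (fun p => D p = 0)
    (fun a b ha hb => by rw [leibniz, ha, hb, smul_zero, smul_zero, add_zero])
    D.map_one_eq_zero (fun t ht => by rw [leibniz_pow, h t ht, smul_zero, smul_zero])

end Derivation

namespace MvPolynomial

variable {R σ : Type*} [CommRing R]

noncomputable def rotationDerivation (i j : σ) :
    Derivation R (MvPolynomial σ R) (MvPolynomial σ R) :=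
  (X j : MvPolynomial σ R) • pderiv i - (X i : MvPolynomial σ R) • pderiv j

theorem rotationDerivation_apply (i j : σ) (f : MvPolynomial σ R) :
    rotationDerivation i j f = X j * pderiv i f - X i * pderiv j f :=
  rfl

theorem pderiv_sum_X_sq [DecidableEq σ] (s : Finset σ) (i : σ) :
    pderiv i (∑ x ∈ s, X x ^ 2 : MvPolynomial σ R) = if i ∈ s then 2 * X i else 0 := by
  simp [pderiv_X, Pi.single_apply]

theorem rotationDerivation_sum_X_sq {s : Finset σ} {i j : σ} (h : i ∈ s ↔ j ∈ s) :
    rotationDerivation i j (∑ x ∈ s, X x ^ 2 : MvPolynomial σ R) = 0 := by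
  classical
  rw [rotationDerivation_apply, pderiv_sum_X_sq, pderiv_sum_X_sq]
  by_cases hi : i ∈ s
  · rw [if_pos hi, if_pos (h.mp hi)]
    ring
  · rw [if_neg hi, if_neg (mt h.mpr hi), mul_zero, mul_zero, sub_zero]

theorem rotationDerivation_sum_sigma_X_sq {ι : Type*} {β : ι → Type*} (l t : ι) [Fintype (β t)]
    (i j : β l) :
    rotationDerivation (⟨l, i⟩ : Σ a, β a) ⟨l, j⟩
      (∑ r : β t, X ⟨t, r⟩ ^ 2 : MvPolynomial _ R) = 0 := by
  have hsum : (∑ r : β t, X ⟨t, r⟩ ^ 2 : MvPolynomial _ R) =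
      ∑ x ∈ Finset.univ.map (Function.Embedding.sigmaMk t), X x ^ 2 := by
    rw [Finset.sum_map]; rfl
  rw [hsum]
  refine rotationDerivation_sum_X_sq ?_
  simp only [Finset.mem_map, Finset.mem_univ, Function.Embedding.sigmaMk_apply, Sigma.mk.injEq,
    true_and, exists_and_left, and_congr_right_iff]
  rintro rfl
  exact ⟨fun _ => ⟨j, .rfl⟩, fun _ => ⟨i, .rfl⟩⟩

end MvPolynomial

theorem multi_eigenminors_invariant_add_q_pow_general (k : ℕ)
    (m e : Fin k → ℕ)
    (T : MvPolynomial (Σ l : Fin k, Fin (m l + 1)) ℂ)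
    (c : ℂ) :
    ∀ (l : Fin k) (i j : Fin (m l + 1)),
      X (⟨l, j⟩ : Σ l : Fin k, Fin (m l + 1)) *
          pderiv (⟨l, i⟩ : Σ l : Fin k, Fin (m l + 1))
            (T + C c * ∏ t : Fin k,
              (∑ r : Fin (m t + 1), X (⟨t, r⟩ : Σ l : Fin k, Fin (m l + 1)) ^ 2) ^ e t)
        - X (⟨l, i⟩ : Σ l : Fin k, Fin (m l + 1)) *
          pderiv (⟨l, j⟩ : Σ l : Fin k, Fin (m l + 1))
            (T + C c * ∏ t : Fin k,
              (∑ r : Fin (m t + 1), X (⟨t, r⟩ : Σ l : Fin k, Fin (m l + 1)) ^ 2) ^ e t) =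
      X (⟨l, j⟩ : Σ l : Fin k, Fin (m l + 1)) *
          pderiv (⟨l, i⟩ : Σ l : Fin k, Fin (m l + 1)) T
        - X (⟨l, i⟩ : Σ l : Fin k, Fin (m l + 1)) *
          pderiv (⟨l, j⟩ : Σ l : Fin k, Fin (m l + 1)) T := by
  intro l i j
  rw [← rotationDerivation_apply, ← rotationDerivation_apply]
  have hq : ∀ t, rotationDerivation ⟨l, i⟩ ⟨l, j⟩
      (∑ r : Fin (m t + 1), X (⟨t, r⟩ : Σ l : Fin k, Fin (m l + 1)) ^ 2 : MvPolynomial _ ℂ) = 0 :=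
    fun t => rotationDerivation_sum_sigma_X_sq (β := fun l => Fin (m l + 1)) l t i j
  rw [map_add, C_mul', Derivation.map_smul,
    Derivation.map_prod_pow_eq_zero _ _ _ _ fun t _ => hq t, smul_zero, add_zero]

theorem multi_eigenminors_invariant_add_q_pow (k : ℕ) (hk : 1 ≤ k)
    (m e : Fin k → ℕ) (hm : ∀ l, 1 ≤ m l) (he : ∀ l, 1 ≤ e l)
    (T : MvPolynomial (Σ l : Fin k, Fin (m l + 1)) ℂ)
    (hT : ∀ s ∈ T.support, ∀ l : Fin k, (∑ i : Fin (m l + 1), s ⟨l, i⟩) = 2 * e l)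
    (c : ℂ) :
    ∀ (l : Fin k) (i j : Fin (m l + 1)),
      X (⟨l, j⟩ : Σ l : Fin k, Fin (m l + 1)) *
          pderiv (⟨l, i⟩ : Σ l : Fin k, Fin (m l + 1))
            (T + C c * ∏ t : Fin k,
              (∑ r : Fin (m t + 1), X (⟨t, r⟩ : Σ l : Fin k, Fin (m l + 1)) ^ 2) ^ e t)
        - X (⟨l, i⟩ : Σ l : Fin k, Fin (m l + 1)) *
          pderiv (⟨l, j⟩ : Σ l : Fin k, Fin (m l + 1))
            (T + C c * ∏ t : Fin k,
              (∑ r : Fin (m t + 1), X (⟨t, r⟩ : Σ l : Fin k, Fin (m l + 1)) ^ 2) ^ e t) =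
      X (⟨l, j⟩ : Σ l : Fin k, Fin (m l + 1)) *
          pderiv (⟨l, i⟩ : Σ l : Fin k, Fin (m l + 1)) T
        - X (⟨l, i⟩ : Σ l : Fin k, Fin (m l + 1)) *
          pderiv (⟨l, j⟩ : Σ l : Fin k, Fin (m l + 1)) T :=
  multi_eigenminors_invariant_add_q_pow_general k m e T c
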